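/- arXiv:1206.0766 — 8 statements merged into one kernel-verified Lean document; each statement's English description precedes it below -/
import Mathlib

section
/- Let M ⊆ ℝ^N be a nonempty set, let L_M be its affine span and d the dimension of the direction submodule of L_M. Define T = {i | there exists v ∈ M with v_i ≠ 0}. Then the set {v ∈ M | supp(v) ≠ T} has d-dimensional Hausdorff measure zero; that is, for almost all v ∈ M (with respect to μH[d]), v_i ≠ 0 for every i ∈ T and v_i = 0 for every i ∉ T. (Equation (4) of the paper: almost all steady states have exactly the typical set of active fluxes.) -/
/-!
The bad set is covered by the sets `{v ∈ M | v i = 0}` with `i ∈ T`. For such `i` some `w ∈ M`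
has `w i ≠ 0`, so `{v | v i = 0}` cuts the affine span of `M` in a proper affine subspace,
whose dimension, hence Hausdorff dimension, is smaller than `d`.
-/

open MeasureTheory Set Module

section AffineSubspace

variable {E : Type*} [NormedAddCommGroup E] [NormedSpace ℝ E] [FiniteDimensional ℝ E]

theorem AffineSubspace.dimH_eq_finrank_direction (S : AffineSubspace ℝ E)
    (hS : (S : Set E).Nonempty) : dimH (S : Set E) = finrank ℝ S.direction :=
  Real.Convex.dimH_eq_finrank_vectorSpan S.convex hS

variable [MeasurableSpace E] [BorelSpace E]

theorem AffineSubspace.hausdorffMeasure_eq_zero_of_finrank_lt {S : AffineSubspace ℝ E} {d : ℝ}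
    (hd : (finrank ℝ S.direction : ℝ) < d) : μH[d] (S : Set E) = 0 := by
  rcases (S : Set E).eq_empty_or_nonempty with hS | hS
  · rw [hS, measure_empty]
  lift d to NNReal using (Nat.cast_nonneg _).trans hd.le
  refine hausdorffMeasure_of_dimH_lt ?_
  rw [S.dimH_eq_finrank_direction hS]
  exact_mod_cast hd

theorem AffineSubspace.hausdorffMeasure_eq_zero_of_lt {S T : AffineSubspace ℝ E} (h : S < T) :
    μH[finrank ℝ T.direction] (S : Set E) = 0 := by
  rcases (S : Set E).eq_empty_or_nonempty with hS | hS
  · rw [hS, measure_empty]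
  refine hausdorffMeasure_eq_zero_of_finrank_lt ?_
  exact_mod_cast Submodule.finrank_lt_finrank_of_lt (direction_lt_of_nonempty h hS)

theorem hausdorffMeasure_sep_eq_zero_of_exists_ne_zero (f : E →ₗ[ℝ] ℝ) {M : Set E}
    (hM : ∃ w ∈ M, f w ≠ 0) : μH[finrank ℝ (affineSpan ℝ M).direction] {v ∈ M | f v = 0} = 0 := by
  obtain ⟨w, hwM, hw⟩ := hM
  let S := affineSpan ℝ M ⊓ (LinearMap.ker f).toAffineSubspace
  have hS : S < affineSpan ℝ M := by
    refine inf_le_left.lt_of_ne fun hS => hw ?_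
    exact (hS.ge (subset_affineSpan ℝ M hwM)).2
  refine measure_mono_null (fun v hv => ?_) (AffineSubspace.hausdorffMeasure_eq_zero_of_lt hS)
  exact ⟨subset_affineSpan ℝ M hv.1, hv.2⟩

end AffineSubspace

theorem sep_support_ne_subset_biUnion {ι R : Type*} [Zero R] (M : Set (ι → R)) :
    {v ∈ M | {i | v i ≠ 0} ≠ {i | ∃ w ∈ M, w i ≠ 0}} ⊆
      ⋃ i ∈ {i | ∃ w ∈ M, w i ≠ 0}, {v ∈ M | v i = 0} := by
  rintro v ⟨hvM, hne⟩
  have hsub : {i | v i ≠ 0} ⊆ {i | ∃ w ∈ M, w i ≠ 0} := fun i hi => ⟨v, hvM, hi⟩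
  obtain ⟨i, hi, hvi⟩ := exists_of_ssubset (hsub.ssubset_of_ne hne)
  exact mem_biUnion hi ⟨hvM, not_not.1 hvi⟩

theorem almost_all_have_typical_support_general (N : ℕ) (M : Set (Fin N → ℝ)) :
    μH[(Module.finrank ℝ (affineSpan ℝ M).direction : ℝ)]
      {v ∈ M | {i : Fin N | v i ≠ 0} ≠ {i : Fin N | ∃ w ∈ M, w i ≠ 0}} = 0 := by
  refine measure_mono_null (sep_support_ne_subset_biUnion M) ?_
  refine (measure_biUnion_null_iff (to_countable _)).2 fun i hi => ?_
  exact hausdorffMeasure_sep_eq_zero_of_exists_ne_zero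
    (LinearMap.proj i : (Fin N → ℝ) →ₗ[ℝ] ℝ) hi

/-- **Equation (4) of the paper.** Let `M ⊆ ℝ^N` be nonempty with affine span of
direction dimension `d`, and let `T = {i | ∃ v ∈ M, v i ≠ 0}`. Then almost all
`v ∈ M` (w.r.t. `d`-dimensional Hausdorff measure) have support exactly `T`: the set
of `v ∈ M` whose support differs from `T` has measure zero. -/
theorem almost_all_have_typical_support (N : ℕ) (M : Set (Fin N → ℝ))
    (hM : M.Nonempty) :
    μH[(Module.finrank ℝ (affineSpan ℝ M).direction : ℝ)]
      {v ∈ M | {i : Fin N | v i ≠ 0} ≠ {i : Fin N | ∃ w ∈ M, w i ≠ 0}} = 0 :=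
  almost_all_have_typical_support_general N M
end

section
/- Suppose v₀ ∈ M is optimal, and suppose (u₁, u₂) is dual feasible with u₁ᵀ (A v₀ − b) = 0. Then the set of all optimal points equals M_opt = {v ∈ M | aᵢᵀ v = bᵢ for every index i with u₁ᵢ > 0}; in particular, every constraint associated with a positive dual component is binding for all optimal solutions. (Theorem 3 of the paper.) -/
open Matrix

/-- **Theorem 3 of the paper.** Let `v₀` be an optimal solution with a corresponding
dual solution `(u₁, u₂)` (dual feasible and complementary slack). Then the set of all
optimal solutions equals `{v ∈ M | aᵢᵀ v = bᵢ for every i with u₁ᵢ > 0}`; in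
particular, every constraint associated with a positive dual component is binding for
all optimal solutions. -/
theorem optimal_set_characterization (m N K : ℕ)
    (S : Matrix (Fin m) (Fin N) ℝ) (A : Matrix (Fin K) (Fin N) ℝ)
    (b : Fin K → ℝ) (c : Fin N → ℝ) (v₀ : Fin N → ℝ)
    (u₁ : Fin K → ℝ) (u₂ : Fin m → ℝ)
    (M : Set (Fin N → ℝ))
    (hMdef : M = {v : Fin N → ℝ | S.mulVec v = 0 ∧ ∀ j, A.mulVec v j ≤ b j})
    (hv₀ : v₀ ∈ M) (hopt : ∀ w ∈ M, c ⬝ᵥ w ≤ c ⬝ᵥ v₀)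
    (hdual : Aᵀ.mulVec u₁ + Sᵀ.mulVec u₂ = c) (hu₁ : ∀ j, 0 ≤ u₁ j)
    (hcs : u₁ ⬝ᵥ (A.mulVec v₀ - b) = 0) :
    {v ∈ M | ∀ w ∈ M, c ⬝ᵥ w ≤ c ⬝ᵥ v} =
      {v ∈ M | ∀ i : Fin K, 0 < u₁ i → A.mulVec v i = b i} := by
  -- key: for v with Sv = 0, c ⬝ᵥ v = u₁ ⬝ᵥ A.mulVec v
  have key : ∀ v : Fin N → ℝ, S.mulVec v = 0 → c ⬝ᵥ v = u₁ ⬝ᵥ A.mulVec v := by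
    intro v hSv
    rw [← hdual, add_dotProduct, mulVec_transpose, mulVec_transpose,
      ← dotProduct_mulVec, ← dotProduct_mulVec, hSv]
    simp
  have hv₀' := hMdef ▸ hv₀
  have hcv₀ : c ⬝ᵥ v₀ = u₁ ⬝ᵥ b := by
    have := key v₀ hv₀'.1
    rw [this, ← sub_eq_zero, ← dotProduct_sub, hcs]
  -- for v ∈ M: v optimal ↔ c⬝v = c⬝v₀ ↔ sum of nonneg terms = 0 ↔ binding
  ext v
  simp only [Set.mem_setOf_eq, Set.mem_sep_iff]
  constructor
  · rintro ⟨hvM, hvopt⟩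
    refine ⟨hvM, ?_⟩
    have hv' := hMdef ▸ hvM
    have heq : c ⬝ᵥ v = c ⬝ᵥ v₀ := le_antisymm (hopt v hvM) (hvopt v₀ hv₀)
    have hsum : ∑ i, u₁ i * (b i - A.mulVec v i) = 0 := by
      have : u₁ ⬝ᵥ (b - A.mulVec v) = 0 := by
        rw [dotProduct_sub, ← key v hv'.1, heq, hcv₀, sub_self]
      simpa [dotProduct, mul_sub] using this
    have hzero := (Finset.sum_eq_zero_iff_of_nonneg (fun i _ =>
      mul_nonneg (hu₁ i) (sub_nonneg.2 (hv'.2 i)))).1 hsum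
    intro i hi
    have := hzero i (Finset.mem_univ i)
    have h2 : b i - A.mulVec v i = 0 := by
      rcases mul_eq_zero.1 this with h | h
      · exact absurd h (ne_of_gt hi)
      · exact h
    linarith
  · rintro ⟨hvM, hbind⟩
    refine ⟨hvM, fun w hw => ?_⟩
    have hv' := hMdef ▸ hvM
    have : c ⬝ᵥ v = u₁ ⬝ᵥ b := by
      rw [key v hv'.1]
      apply Finset.sum_congr rfl
      intro i _
      rcases lt_or_eq_of_le (hu₁ i) with h | h
      · rw [hbind i h]
      · rw [← h, zero_mul, zero_mul]
    rw [this, ← hcv₀]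
    exact hopt w hw
end

section
/- Suppose v₀ ∈ M is optimal, and suppose (u₁, u₂) is dual feasible with u₁ᵀ (A v₀ − b) = 0. Suppose further that for some row index j and some coordinate index i, the j-th row of A equals −eᵢᵀ (the negative of the i-th standard basis vector) and b_j = 0, so the j-th constraint encodes the irreversibility condition v_i ≥ 0. If u₁ⱼ > 0, then every optimal solution v ∈ M_opt has v_i = 0. (Irreversibility-induced inactivation in all optimal states.) -/
open Matrix

/-- **Irreversibility-induced inactivation in all optimal states.** Suppose `v₀` is
optimal with dual solution `(u₁, u₂)` satisfying complementary slackness, and suppose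
the `j`-th row of `A` is `−eᵢᵀ` with `b j = 0` (encoding the irreversibility
constraint `v i ≥ 0`). If `u₁ j > 0`, then every optimal solution `v` has `v i = 0`. -/
theorem irreversibility_forces_inactivity (m N K : ℕ)
    (S : Matrix (Fin m) (Fin N) ℝ) (A : Matrix (Fin K) (Fin N) ℝ)
    (b : Fin K → ℝ) (c : Fin N → ℝ) (v₀ : Fin N → ℝ)
    (u₁ : Fin K → ℝ) (u₂ : Fin m → ℝ)
    (M : Set (Fin N → ℝ))
    (hMdef : M = {v : Fin N → ℝ | S.mulVec v = 0 ∧ ∀ j, A.mulVec v j ≤ b j})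
    (hv₀ : v₀ ∈ M) (hopt : ∀ w ∈ M, c ⬝ᵥ w ≤ c ⬝ᵥ v₀)
    (hdual : Aᵀ.mulVec u₁ + Sᵀ.mulVec u₂ = c) (hu₁ : ∀ j, 0 ≤ u₁ j)
    (hcs : u₁ ⬝ᵥ (A.mulVec v₀ - b) = 0)
    (j : Fin K) (i : Fin N)
    (hrow : (fun k => A j k) = -(Pi.single i (1 : ℝ))) (hbj : b j = 0)
    (huj : 0 < u₁ j) :
    ∀ v ∈ M, (∀ w ∈ M, c ⬝ᵥ w ≤ c ⬝ᵥ v) → v i = 0 := by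
  subst hMdef
  -- key: for v ∈ M, c ⬝ᵥ v = u₁ ⬝ᵥ A.mulVec v
  have key : ∀ v : Fin N → ℝ, S.mulVec v = 0 → c ⬝ᵥ v = u₁ ⬝ᵥ A.mulVec v := by
    intro v hS
    rw [← hdual, add_dotProduct]
    have h1 : Aᵀ.mulVec u₁ ⬝ᵥ v = u₁ ⬝ᵥ A.mulVec v := by
      rw [Matrix.mulVec_transpose, ← Matrix.dotProduct_mulVec]
    have h2 : Sᵀ.mulVec u₂ ⬝ᵥ v = u₂ ⬝ᵥ S.mulVec v := by
      rw [Matrix.mulVec_transpose, ← Matrix.dotProduct_mulVec]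
    rw [h1, h2, hS]
    simp
  intro v hv hvopt
  obtain ⟨hvS, hvA⟩ := hv
  obtain ⟨hv₀S, hv₀A⟩ := hv₀
  have hcv₀ : c ⬝ᵥ v₀ = u₁ ⬝ᵥ b := by
    rw [key v₀ hv₀S]
    have := hcs
    rw [dotProduct_sub] at this
    linarith
  have hcv : c ⬝ᵥ v = c ⬝ᵥ v₀ :=
    le_antisymm (hopt v ⟨hvS, hvA⟩) (hvopt v₀ ⟨hv₀S, hv₀A⟩)
  have hvb : u₁ ⬝ᵥ (b - A.mulVec v) = 0 := by
    rw [dotProduct_sub]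
    have := key v hvS
    linarith [hcv, hcv₀]
  have hterm : ∀ k ∈ Finset.univ, (0:ℝ) ≤ u₁ k * (b - A.mulVec v) k := by
    intro k _
    exact mul_nonneg (hu₁ k) (by simpa using hvA k)
  have hzero : u₁ j * (b - A.mulVec v) j = 0 := by
    have hsum : ∑ k, u₁ k * (b - A.mulVec v) k = 0 := hvb
    exact (Finset.sum_eq_zero_iff_of_nonneg hterm).mp hsum j (Finset.mem_univ j)
  have hAvj : A.mulVec v j = 0 := by
    have : (b - A.mulVec v) j = 0 := by
      rcases mul_eq_zero.mp hzero with h | h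
      · exact absurd h (ne_of_gt huj)
      · exact h
    simp only [Pi.sub_apply, hbj] at this
    linarith
  have hAvi : A.mulVec v j = - v i := by
    show A j ⬝ᵥ v = - v i
    have hA : A j = -(Pi.single i (1:ℝ)) := hrow
    rw [hA]
    simp [dotProduct, Pi.single_apply, ite_mul, Finset.sum_ite_eq]
  linarith [hAvj, hAvi]
end

section
/- Suppose M_opt is nonempty; let L be the affine span of M_opt, d the dimension of the direction submodule of L, and n₀ = #{i | w_i = 0 for all w ∈ M_opt}. Then the set {v ∈ M_opt | #{i | v_i ≠ 0} ≠ N − n₀} has d-dimensional Hausdorff measure zero; that is, for almost all optimal points v, the number of nonzero coordinates of v equals N − n₀. (Equation (12) of the paper: the upper bound on the number of active reactions is attained for almost all optimal states.) -/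
open Matrix MeasureTheory Set Pointwise
open scoped ENNReal NNReal

/-- **Equation (12) of the paper.** Let `Mopt` be the (nonempty) set of optimal
solutions, `L` its affine span with direction dimension `d`, and `n₀` the number of
coordinates that vanish on all of `Mopt`. Then for almost all optimal points `v`
(w.r.t. `d`-dimensional Hausdorff measure), the number of nonzero coordinates of `v`
equals `N − n₀`. -/
theorem almost_all_optimal_states_attain_upper_bound (m N K : ℕ)
    (S : Matrix (Fin m) (Fin N) ℝ) (A : Matrix (Fin K) (Fin N) ℝ)
    (b : Fin K → ℝ) (c : Fin N → ℝ)
    (M Mopt : Set (Fin N → ℝ))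
    (hMdef : M = {v : Fin N → ℝ | S.mulVec v = 0 ∧ ∀ j, A.mulVec v j ≤ b j})
    (hMoptdef : Mopt = {v ∈ M | ∀ w ∈ M, c ⬝ᵥ w ≤ c ⬝ᵥ v})
    (hne : Mopt.Nonempty) :
    μH[(Module.finrank ℝ (affineSpan ℝ Mopt).direction : ℝ)]
      {v ∈ Mopt |
        {i : Fin N | v i ≠ 0}.ncard ≠
          N - {i : Fin N | ∀ w ∈ Mopt, w i = 0}.ncard} = 0 := by
  classical
  set L := affineSpan ℝ Mopt with hL
  set d : ℕ := Module.finrank ℝ L.direction with hd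
  set Z : Set (Fin N) := {i | ∀ w ∈ Mopt, w i = 0} with hZ
  set U : Fin N → Set (Fin N → ℝ) := fun i =>
    {v | v ∈ (L : Set (Fin N → ℝ)) ∧ v i = 0 ∧ ∃ w ∈ Mopt, w i ≠ 0} with hU
  have hsub : {v ∈ Mopt | ({i : Fin N | v i ≠ 0}).ncard ≠ N - Z.ncard} ⊆ ⋃ i, U i := by
    rintro v ⟨hv, hcard⟩
    have hvL : v ∈ (L : Set (Fin N → ℝ)) := subset_affineSpan ℝ Mopt hv
    by_contra hnot
    simp only [Set.mem_iUnion] at hnot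
    push_neg at hnot
    apply hcard
    have heq : {i : Fin N | v i ≠ 0} = Zᶜ := by
      ext i
      simp only [Set.mem_setOf_eq, Set.mem_compl_iff, hZ]
      constructor
      · intro hvi hZi; exact hvi (hZi v hv)
      · intro hZi
        push_neg at hZi
        obtain ⟨w, hw, hwi⟩ := hZi
        intro hvi
        exact hnot i ⟨hvL, hvi, w, hw, hwi⟩
    rw [heq]
    have h1 : Z.ncard + Zᶜ.ncard = Nat.card (Fin N) := Set.ncard_add_ncard_compl Z
    rw [Nat.card_eq_fintype_card, Fintype.card_fin] at h1
    omega
  refine measure_mono_null hsub ?_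
  rw [measure_iUnion_null_iff]
  intro i
  rcases em (U i).Nonempty with ⟨x₀, hx₀⟩ | hemp
  · obtain ⟨hx₀L, hx₀i, w₀, hw₀, hw₀i⟩ := hx₀
    set W : Submodule ℝ (Fin N → ℝ) :=
      L.direction ⊓ LinearMap.ker (LinearMap.proj (R := ℝ) (φ := fun _ : Fin N => ℝ) i)
      with hW
    have hx₀L' : x₀ ∈ L := hx₀L
    have hmemdir : ∀ v ∈ L, v - x₀ ∈ L.direction := fun v hv => by
      simpa using AffineSubspace.vsub_mem_direction hv hx₀L'
    have hWlt : W < L.direction := by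
      refine lt_of_le_of_ne inf_le_left ?_
      intro h
      have h1 : w₀ - x₀ ∈ L.direction := hmemdir w₀ (subset_affineSpan ℝ Mopt hw₀)
      rw [← h] at h1
      have h2 : (w₀ - x₀) i = 0 := h1.2
      simp only [Pi.sub_apply, hx₀i, sub_zero] at h2
      exact hw₀i h2
    have hdim : Module.finrank ℝ W < d := Submodule.finrank_lt_finrank_of_lt hWlt
    have hUsub : U i ⊆ x₀ +ᵥ (W : Set (Fin N → ℝ)) := by
      rintro v ⟨hvL, hvi, -⟩
      refine ⟨v - x₀, ⟨hmemdir v hvL, ?_⟩, by simp⟩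
      show (v - x₀) i = 0
      simp [hvi, hx₀i]
    have hdimH : dimH (U i) < (d : ℝ≥0∞) := by
      have h1 : dimH (U i) ≤ dimH (x₀ +ᵥ (W : Set (Fin N → ℝ))) := dimH_mono hUsub
      have h2 : dimH (x₀ +ᵥ (W : Set (Fin N → ℝ))) = dimH (W : Set (Fin N → ℝ)) := by
        rw [← Set.image_vadd]
        exact by
          have := (AffineIsometryEquiv.constVAdd ℝ (Fin N → ℝ) x₀).isometry.dimH_image (W : Set (Fin N → ℝ))
          simpa [AffineIsometryEquiv.coe_constVAdd] using this
      have h3 : dimH ((W : Set (Fin N → ℝ))) = (Module.finrank ℝ W : ℝ≥0∞) := by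
        have he : (W : Set (Fin N → ℝ)) = Subtype.val '' (Set.univ : Set W) := by simp
        rw [he, isometry_subtype_coe.dimH_image, Real.dimH_univ_eq_finrank]
      calc dimH (U i) ≤ (Module.finrank ℝ W : ℝ≥0∞) := by rw [← h3, ← h2]; exact h1
        _ < (d : ℝ≥0∞) := by exact_mod_cast hdim
    have := hausdorffMeasure_of_dimH_lt (d := (d : ℝ≥0)) (s := U i) (by exact_mod_cast hdimH)
    simpa using this
  · rw [Set.not_nonempty_iff_eq_empty] at hemp
    simp [hemp]
end

section
/- Let M ⊆ ℝ^N be nonempty, let L_M be its affine span and d the dimension of the direction submodule of L_M, and let M_opt ⊆ M be the set of maximizers of cᵀ v over M for some c ∈ ℝ^N. If there is an index i such that some v ∈ M has v_i ≠ 0 but every w ∈ M_opt has w_i = 0, then M_opt has d-dimensional Hausdorff measure zero in ℝ^N; that is, almost all states in M are non-optimal. (Consequence noted in Section 4 of the paper.) -/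
open Matrix MeasureTheory ENNReal NNReal

/-- **Consequence noted in Section 4 of the paper.** Let `M ⊆ ℝ^N` be nonempty with
affine span of direction dimension `d`, and let `Mopt` be the set of maximizers of
`cᵀ v` over `M`. If some coordinate `i` is nonzero at some point of `M` but vanishes
on all of `Mopt`, then `Mopt` has `d`-dimensional Hausdorff measure zero: almost all
states in `M` are non-optimal. -/
theorem almost_all_states_are_nonoptimal (N : ℕ) (c : Fin N → ℝ)
    (M : Set (Fin N → ℝ)) (hM : M.Nonempty) (i : Fin N)
    (hv : ∃ v ∈ M, v i ≠ 0)
    (hw : ∀ w ∈ {v ∈ M | ∀ u ∈ M, c ⬝ᵥ u ≤ c ⬝ᵥ v}, w i = 0) :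
    μH[(Module.finrank ℝ (affineSpan ℝ M).direction : ℝ)]
      {v ∈ M | ∀ u ∈ M, c ⬝ᵥ u ≤ c ⬝ᵥ v} = 0 := by
  set S := {v ∈ M | ∀ u ∈ M, c ⬝ᵥ u ≤ c ⬝ᵥ v} with hS
  rcases S.eq_empty_or_nonempty with h | ⟨w0, hw0⟩
  · simp [h]
  obtain ⟨v, hvM, hvi⟩ := hv
  have hSM : S ⊆ M := fun x hx => hx.1
  set D := (affineSpan ℝ M).direction with hD
  set E := (affineSpan ℝ S).direction with hE
  have hED : E ≤ D := AffineSubspace.direction_le (affineSpan_mono ℝ hSM)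
  have hvd : v - w0 ∈ D := by
    simpa using AffineSubspace.vsub_mem_direction
      (subset_affineSpan ℝ M hvM) (subset_affineSpan ℝ M (hSM hw0))
  have hEker : ∀ x ∈ E, x i = 0 := by
    intro x hx
    rw [hE, direction_affineSpan, vectorSpan_def] at hx
    have hx' : x ∈ LinearMap.ker (LinearMap.proj (R := ℝ) (φ := fun _ : Fin N => ℝ) i) := by
      refine Submodule.span_le.2 ?_ hx
      rintro y ⟨a, ha, b, hb, rfl⟩
      simp [LinearMap.mem_ker, hw a ha, hw b hb]
    simpa using hx'
  have hvE : v - w0 ∉ E := by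
    intro h
    have := hEker _ h
    have hw0i : w0 i = 0 := hw w0 hw0
    apply hvi
    simpa [hw0i] using this
  have hlt : E < D := lt_of_le_of_ne hED (fun h => hvE (h ▸ hvd))
  have hfin : Module.finrank ℝ E < Module.finrank ℝ D :=
    Submodule.finrank_lt_finrank_of_lt hlt
  have hsub : S ⊆ (fun x => w0 + x) '' (E : Set (Fin N → ℝ)) := by
    intro x hx
    refine ⟨x - w0, ?_, by simp⟩
    simpa using AffineSubspace.vsub_mem_direction
      (subset_affineSpan ℝ S hx) (subset_affineSpan ℝ S hw0)
  have hiso : Isometry (fun x : Fin N → ℝ => w0 + x) :=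
    Isometry.of_dist_eq fun a b => by simp [dist_add_left]
  have hdimE : dimH ((fun x => w0 + x) '' (E : Set (Fin N → ℝ)))
      = (Module.finrank ℝ E : ℝ≥0∞) := by
    rw [hiso.dimH_image]
    have hrange : (E : Set (Fin N → ℝ)) = Set.range ((↑) : E → Fin N → ℝ) :=
      Subtype.range_coe.symm
    rw [hrange, ← Set.image_univ, isometry_subtype_coe.dimH_image,
      Real.dimH_univ_eq_finrank]
  have hdim : dimH S < ((Module.finrank ℝ D : ℝ≥0) : ℝ≥0∞) := by
    calc dimH S ≤ dimH ((fun x => w0 + x) '' (E : Set (Fin N → ℝ))) := dimH_mono hsub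
      _ = (Module.finrank ℝ E : ℝ≥0∞) := hdimE
      _ < _ := by exact_mod_cast hfin
  have hmeas := hausdorffMeasure_of_dimH_lt (X := Fin N → ℝ)
    (d := (Module.finrank ℝ D : ℝ≥0)) hdim
  simpa using hmeas
end

section
/- Let M = {v ∈ ℝ^N | S v = 0 and A v ≤ b componentwise} for an m × N real matrix S, a K × N real matrix A, and b ∈ ℝ^K. Then the set of objective vectors c ∈ ℝ^N for which there exist two distinct maximizers of x ↦ cᵀ x over M has N-dimensional Lebesgue measure zero. (Key step in the proof of Theorem 4.) -/
open Matrix MeasureTheory Filter Topology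

/-- The dot product with a fixed vector as a linear map. -/
noncomputable def dotLin {N : ℕ} (d : Fin N → ℝ) : (Fin N → ℝ) →ₗ[ℝ] ℝ where
  toFun c := c ⬝ᵥ d
  map_add' x y := by simp [add_dotProduct]
  map_smul' r x := by simp [smul_dotProduct]

lemma badJ_measure_zero {m N K : ℕ}
    (S : Matrix (Fin m) (Fin N) ℝ) (A : Matrix (Fin K) (Fin N) ℝ)
    (J : Finset (Fin K)) :
    volume {c : Fin N → ℝ | ∃ d, d ≠ 0 ∧ S.mulVec d = 0 ∧
        (∀ j ∈ J, A.mulVec d j = 0) ∧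
        ∀ e, S.mulVec e = 0 → (∀ j ∈ J, A.mulVec e j = 0) → c ⬝ᵥ e = 0} = 0 := by
  by_cases h : ∃ d, d ≠ 0 ∧ S.mulVec d = 0 ∧ ∀ j ∈ J, A.mulVec d j = 0
  · obtain ⟨d₀, hd₀, hSd₀, hAd₀⟩ := h
    have hker : (LinearMap.ker (dotLin d₀) : Set (Fin N → ℝ)) ≠ Set.univ := by
      intro hk
      have : d₀ ∈ LinearMap.ker (dotLin d₀) := by
        rw [SetLike.mem_coe.symm, hk]; trivial
      have h0 : d₀ ⬝ᵥ d₀ = 0 := this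
      exact hd₀ ((dotProduct_self_eq_zero).mp h0)
    have hmsub : LinearMap.ker (dotLin d₀) ≠ ⊤ := by
      intro hk; apply hker; rw [hk]; simp
    refine measure_mono_null ?_ (Measure.addHaar_submodule volume _ hmsub)
    intro c hc
    obtain ⟨d, hd, hSd, hAd, hc⟩ := hc
    exact hc d₀ hSd₀ hAd₀
  · have : {c : Fin N → ℝ | ∃ d, d ≠ 0 ∧ S.mulVec d = 0 ∧
        (∀ j ∈ J, A.mulVec d j = 0) ∧
        ∀ e, S.mulVec e = 0 → (∀ j ∈ J, A.mulVec e j = 0) → c ⬝ᵥ e = 0} = ∅ := by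
      ext c; simp only [Set.mem_setOf_eq, Set.mem_empty_iff_false, iff_false]
      rintro ⟨d, hd, hSd, hAd, -⟩
      exact h ⟨d, hd, hSd, hAd⟩
    rw [this]; exact measure_empty

/-- **Key step in the proof of Theorem 4.** For a polyhedron
`M = {v | S v = 0, A v ≤ b}`, the set of objective vectors `c` for which there exist
two distinct maximizers of `x ↦ cᵀ x` over `M` has `N`-dimensional Lebesgue measure
zero. -/
theorem multiple_maximizers_measure_zero (m N K : ℕ)
    (S : Matrix (Fin m) (Fin N) ℝ) (A : Matrix (Fin K) (Fin N) ℝ)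
    (b : Fin K → ℝ)
    (M : Set (Fin N → ℝ))
    (hMdef : M = {v : Fin N → ℝ | S.mulVec v = 0 ∧ ∀ j, A.mulVec v j ≤ b j}) :
    volume {c : Fin N → ℝ | ∃ v ∈ M, ∃ w ∈ M, v ≠ w ∧
        (∀ u ∈ M, c ⬝ᵥ u ≤ c ⬝ᵥ v) ∧ (∀ u ∈ M, c ⬝ᵥ u ≤ c ⬝ᵥ w)} = 0 := by
  have hsub : {c : Fin N → ℝ | ∃ v ∈ M, ∃ w ∈ M, v ≠ w ∧
        (∀ u ∈ M, c ⬝ᵥ u ≤ c ⬝ᵥ v) ∧ (∀ u ∈ M, c ⬝ᵥ u ≤ c ⬝ᵥ w)} ⊆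
      ⋃ J : Finset (Fin K), {c : Fin N → ℝ | ∃ d, d ≠ 0 ∧ S.mulVec d = 0 ∧
        (∀ j ∈ J, A.mulVec d j = 0) ∧
        ∀ e, S.mulVec e = 0 → (∀ j ∈ J, A.mulVec e j = 0) → c ⬝ᵥ e = 0} := by
    rintro c ⟨v, hv, w, hw, hvw, hmaxv, hmaxw⟩
    subst hMdef
    obtain ⟨hSv, hAv⟩ := hv
    obtain ⟨hSw, hAw⟩ := hw
    -- c ⬝ᵥ v = c ⬝ᵥ w
    have hvwval : c ⬝ᵥ v = c ⬝ᵥ w :=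
      le_antisymm (hmaxw v ⟨hSv, hAv⟩) (hmaxv w ⟨hSw, hAw⟩)
    -- midpoint
    obtain ⟨z, hz⟩ : ∃ z : Fin N → ℝ, z = (1/2 : ℝ) • (v + w) := ⟨_, rfl⟩
    have hSz : S.mulVec z = 0 := by
      rw [hz, mulVec_smul, mulVec_add, hSv, hSw]; simp
    have hAz : ∀ j, A.mulVec z j = (A.mulVec v j + A.mulVec w j) / 2 := by
      intro j
      rw [hz, mulVec_smul, mulVec_add]
      simp [Pi.smul_apply]
      ring
    have hAzle : ∀ j, A.mulVec z j ≤ b j := by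
      intro j; rw [hAz j]; have := hAv j; have := hAw j; linarith
    have hzM : z ∈ {v : Fin N → ℝ | S.mulVec v = 0 ∧ ∀ j, A.mulVec v j ≤ b j} :=
      ⟨hSz, hAzle⟩
    have hcz : c ⬝ᵥ z = c ⬝ᵥ v := by
      rw [hz, dotProduct_smul, dotProduct_add, hvwval]; simp; ring
    have hmaxz : ∀ u, S.mulVec u = 0 → (∀ j, A.mulVec u j ≤ b j) → c ⬝ᵥ u ≤ c ⬝ᵥ z := by
      intro u h1 h2; rw [hcz]; exact hmaxv u ⟨h1, h2⟩
    -- active set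
    set J : Finset (Fin K) := Finset.univ.filter (fun j => A.mulVec z j = b j) with hJ
    refine Set.mem_iUnion.mpr ⟨J, ?_⟩
    have key : ∀ e, S.mulVec e = 0 → (∀ j ∈ J, A.mulVec e j = 0) → c ⬝ᵥ e = 0 := by
      intro e hSe hAe
      -- find ε > 0 with z ± ε • e ∈ M
      have hev : ∀ᶠ t in 𝓝 (0:ℝ), ∀ j, j ∉ J → A.mulVec z j + t * A.mulVec e j < b j := by
        rw [eventually_all]
        intro j
        by_cases hj : j ∈ J
        · filter_upwards with t ht; exact absurd hj ht
        · have hlt : A.mulVec z j < b j := by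
            have := hAzle j
            rcases lt_or_eq_of_le this with h | h
            · exact h
            · exact absurd (by simp [hJ, h]) hj
          have hcont : Continuous (fun t : ℝ => A.mulVec z j + t * A.mulVec e j) := by
            continuity
          have htend : Tendsto (fun t : ℝ => A.mulVec z j + t * A.mulVec e j)
              (𝓝 0) (𝓝 (A.mulVec z j)) := by
            have := hcont.tendsto 0
            simpa using this
          filter_upwards [htend.eventually (eventually_lt_nhds hlt)] with t ht _
          exact ht
      obtain ⟨δ, hδpos, hδ⟩ := Metric.eventually_nhds_iff.mp hev
      obtain ⟨ε, hε⟩ : ∃ ε : ℝ, ε = δ / 2 := ⟨_, rfl⟩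
      have hεpos : 0 < ε := by rw [hε]; positivity
      have hmem : ∀ t : ℝ, |t| < δ →
          S.mulVec (z + t • e) = 0 ∧ ∀ j, A.mulVec (z + t • e) j ≤ b j := by
        intro t ht
        constructor
        · rw [mulVec_add, hSz, mulVec_smul, hSe]; simp
        · intro j
          have hAeq : A.mulVec (z + t • e) j = A.mulVec z j + t * A.mulVec e j := by
            rw [mulVec_add, mulVec_smul]
            simp [Pi.smul_apply]
          rw [hAeq]
          by_cases hj : j ∈ J
          · have h1 : A.mulVec z j = b j := by
              simpa [hJ] using hj
            rw [h1, hAe j hj]; simp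
          · have := hδ (y := t) (by rw [Real.dist_0_eq_abs]; exact ht) j hj
            exact this.le
      have h1 := hmaxz (z + ε • e) (hmem ε (by rw [abs_of_pos hεpos]; rw [hε]; linarith)).1
        (hmem ε (by rw [abs_of_pos hεpos]; rw [hε]; linarith)).2
      have h2 := hmaxz (z + (-ε) • e) (hmem (-ε) (by rw [abs_neg, abs_of_pos hεpos]; rw [hε]; linarith)).1
        (hmem (-ε) (by rw [abs_neg, abs_of_pos hεpos]; rw [hε]; linarith)).2
      simp only [dotProduct_add, dotProduct_smul, smul_eq_mul] at h1 h2
      nlinarith [hεpos, h1, h2]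
    refine ⟨w - v, sub_ne_zero.mpr (Ne.symm hvw), ?_, ?_, key⟩
    · rw [mulVec_sub, hSv, hSw]; simp
    · intro j hj
      have hjz : A.mulVec z j = b j := by simpa [hJ] using hj
      have h1 : A.mulVec v j = b j := by
        have := hAz j; have := hAv j; have := hAw j; linarith
      have h2 : A.mulVec w j = b j := by
        have := hAz j; have := hAv j; have := hAw j; linarith
      rw [mulVec_sub]
      simp [h1, h2]
  refine measure_mono_null hsub ?_
  exact measure_iUnion_null (fun J => badJ_measure_zero S A J)
end

section
/- Let M = {v ∈ ℝ^N | S v = 0 and A v ≤ b componentwise} be nonempty, and let c ∈ ℝ^N be such that the function v ↦ cᵀ v is bounded above on M. Then this function attains its supremum on M; that is, there exists v₀ ∈ M with cᵀ v₀ ≥ cᵀ w for all w ∈ M. (Attainment of the optimum for a bounded linear program on a polyhedron.) -/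
open Matrix

/-- One-variable elimination core: a finite system of one-variable inequalities
`α i * x ≤ R i` is solvable iff the sign-zero constraints hold and every lower
bound is below every upper bound. -/
lemma fm_core {ι : Type} [Fintype ι] (α R : ι → ℝ)
    (h0 : ∀ i, α i = 0 → 0 ≤ R i)
    (hpq : ∀ p q, 0 < α p → α q < 0 → α q * R p ≤ α p * R q) :
    ∃ x : ℝ, ∀ i, α i * x ≤ R i := by
  classical
  set P : Finset ι := Finset.univ.filter (fun i => 0 < α i) with hPdef
  set Q : Finset ι := Finset.univ.filter (fun i => α i < 0) with hQdef
  by_cases hP : P.Nonempty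
  · refine ⟨P.inf' hP (fun p => R p / α p), fun i => ?_⟩
    rcases lt_trichotomy (α i) 0 with hi | hi | hi
    · have hx : R i / α i ≤ P.inf' hP (fun p => R p / α p) := by
        apply Finset.le_inf'
        intro p hp
        have hp' : 0 < α p := (Finset.mem_filter.mp hp).2
        rw [div_le_iff_of_neg hi]
        have h1 := hpq p i hp' hi
        rw [div_mul_eq_mul_div, div_le_iff₀ hp']
        nlinarith
      have h2 : α i * P.inf' hP (fun p => R p / α p) ≤ α i * (R i / α i) :=
        mul_le_mul_of_nonpos_left hx hi.le
      have h3 : α i * (R i / α i) = R i := by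
        rw [mul_comm, div_mul_cancel₀ _ hi.ne]
      linarith
    · rw [hi, zero_mul]; exact h0 i hi
    · have hx : P.inf' hP (fun p => R p / α p) ≤ R i / α i :=
        Finset.inf'_le _ (by simp only [hPdef, Finset.mem_filter, Finset.mem_univ, true_and]; exact hi)
      have h2 : α i * P.inf' hP (fun p => R p / α p) ≤ α i * (R i / α i) :=
        mul_le_mul_of_nonneg_left hx hi.le
      have h3 : α i * (R i / α i) = R i := by
        rw [mul_comm, div_mul_cancel₀ _ hi.ne']
      linarith
  · by_cases hQ : Q.Nonempty
    · refine ⟨Q.sup' hQ (fun q => R q / α q), fun i => ?_⟩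
      rcases lt_trichotomy (α i) 0 with hi | hi | hi
      · have hmem : i ∈ Q := Finset.mem_filter.mpr ⟨Finset.mem_univ i, hi⟩
        have hx : R i / α i ≤ Q.sup' hQ (fun q => R q / α q) :=
          Finset.le_sup' (fun q => R q / α q) hmem
        have h2 : α i * Q.sup' hQ (fun q => R q / α q) ≤ α i * (R i / α i) :=
          mul_le_mul_of_nonpos_left hx hi.le
        have h3 : α i * (R i / α i) = R i := by
          rw [mul_comm, div_mul_cancel₀ _ hi.ne]
        linarith
      · rw [hi, zero_mul]; exact h0 i hi
      · exact absurd ⟨i, by simp only [hPdef, Finset.mem_filter, Finset.mem_univ, true_and]; exact hi⟩ hP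
    · refine ⟨0, fun i => ?_⟩
      have hi : α i = 0 := by
        by_contra h
        rcases lt_or_gt_of_ne h with h' | h'
        · exact hQ ⟨i, by simp only [hQdef, Finset.mem_filter, Finset.mem_univ, true_and]; exact h'⟩
        · exact hP ⟨i, by simp only [hPdef, Finset.mem_filter, Finset.mem_univ, true_and]; exact h'⟩
      rw [hi, zero_mul]; exact h0 i hi

lemma dot_comb {n : ℕ} (s r : ℝ) (g h u : Fin n → ℝ) :
    (fun k => s * g k - r * h k) ⬝ᵥ u = s * (g ⬝ᵥ u) - r * (h ⬝ᵥ u) := by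
  simp [dotProduct, Finset.mul_sum, ← Finset.sum_sub_distrib, sub_mul, mul_assoc]

/-- Fourier–Motzkin elimination: the projection to the `t`-variable of a finite
system of linear inequalities in `(v, t)` is itself a finite system of linear
inequalities in `t`. -/
lemma fm_elim (n : ℕ) : ∀ (ι : Type) [Fintype ι] (a : ι → Fin n → ℝ) (d β : ι → ℝ),
    ∃ (κ : Type) (e f : κ → ℝ),
      {t : ℝ | ∃ v : Fin n → ℝ, ∀ i, a i ⬝ᵥ v + d i * t ≤ β i}
        = {t : ℝ | ∀ j, e j * t ≤ f j} := by
  induction n with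
  | zero =>
    intro ι _ a d β
    refine ⟨ι, d, β, ?_⟩
    ext t
    simp only [Set.mem_setOf_eq]
    constructor
    · rintro ⟨v, hv⟩ i
      have := hv i
      simpa [dotProduct] using this
    · intro h
      exact ⟨fun k => 0, fun i => by simpa [dotProduct] using h i⟩
  | succ n ih =>
    intro ι _ a d β
    set α : ι → ℝ := fun i => a i (Fin.last n) with hα
    set a' : ι → Fin n → ℝ := fun i k => a i k.castSucc with ha'
    classical
    let κ₀ := {i : ι // α i = 0} ⊕ ({p : ι // 0 < α p} × {q : ι // α q < 0})
    let A2 : κ₀ → Fin n → ℝ := Sum.elim (fun i => a' i.1)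
      (fun pq => fun k => α pq.1.1 * a' pq.2.1 k - α pq.2.1 * a' pq.1.1 k)
    let d2 : κ₀ → ℝ := Sum.elim (fun i => d i.1)
      (fun pq => α pq.1.1 * d pq.2.1 - α pq.2.1 * d pq.1.1)
    let β2 : κ₀ → ℝ := Sum.elim (fun i => β i.1)
      (fun pq => α pq.1.1 * β pq.2.1 - α pq.2.1 * β pq.1.1)
    obtain ⟨κ, e, f, hT⟩ := ih κ₀ A2 d2 β2
    refine ⟨κ, e, f, ?_⟩
    rw [← hT]
    ext t
    simp only [Set.mem_setOf_eq]
    have key : ∀ (i : ι) (u : Fin n → ℝ) (x : ℝ),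
        a i ⬝ᵥ Fin.snoc u x = a' i ⬝ᵥ u + α i * x := by
      intro i u x
      simp [dotProduct, Fin.sum_univ_castSucc, ha', hα]
    constructor
    · rintro ⟨v, hv⟩
      refine ⟨fun k => v k.castSucc, ?_⟩
      have hvs : v = Fin.snoc (fun k => v k.castSucc) (v (Fin.last n)) := by
        funext k
        exact (Fin.snoc_init_self v).symm ▸ rfl
      rintro (⟨i, hi⟩ | ⟨⟨p, hp⟩, ⟨q, hq⟩⟩)
      · have h1 := hv i
        rw [hvs, key] at h1
        simpa [A2, d2, β2, hi] using h1
      · have h1 := hv p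
        have h2 := hv q
        rw [hvs, key] at h1 h2
        simp only [A2, d2, β2, Sum.elim_inr, dot_comb]
        nlinarith [mul_le_mul_of_nonneg_left h2 hp.le,
          mul_le_mul_of_nonpos_left h1 hq.le]
    · rintro ⟨u, hu⟩
      obtain ⟨x, hx⟩ := fm_core α (fun i => β i - (a' i ⬝ᵥ u + d i * t))
        (by
          intro i hi
          have := hu (Sum.inl ⟨i, hi⟩)
          simp only [A2, d2, β2, Sum.elim_inl] at this
          linarith)
        (by
          intro p q hp hq
          have := hu (Sum.inr (⟨p, hp⟩, ⟨q, hq⟩))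
          simp only [A2, d2, β2, Sum.elim_inr, dot_comb] at this
          nlinarith)
      refine ⟨Fin.snoc u x, fun i => ?_⟩
      rw [key]
      have := hx i
      linarith

/-- **Attainment of the optimum for a bounded linear program on a polyhedron.** If
`M = {v | S v = 0, A v ≤ b}` is nonempty and `v ↦ cᵀ v` is bounded above on `M`, then
the supremum is attained: there exists `v₀ ∈ M` with `cᵀ w ≤ cᵀ v₀` for all
`w ∈ M`. -/
theorem lp_optimum_attained (m N K : ℕ)
    (S : Matrix (Fin m) (Fin N) ℝ) (A : Matrix (Fin K) (Fin N) ℝ)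
    (b : Fin K → ℝ) (c : Fin N → ℝ)
    (M : Set (Fin N → ℝ))
    (hMdef : M = {v : Fin N → ℝ | S.mulVec v = 0 ∧ ∀ j, A.mulVec v j ≤ b j})
    (hne : M.Nonempty) (hbdd : ∃ B : ℝ, ∀ v ∈ M, c ⬝ᵥ v ≤ B) :
    ∃ v₀ ∈ M, ∀ w ∈ M, c ⬝ᵥ w ≤ c ⬝ᵥ v₀ := by
  classical
  obtain ⟨κ, e, f, hT⟩ := fm_elim N ((Fin m ⊕ Fin m) ⊕ (Fin K ⊕ (Unit ⊕ Unit)))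
    (Sum.elim (Sum.elim (fun i => S i) (fun i => -(S i)))
      (Sum.elim (fun j => A j) (Sum.elim (fun _ => c) (fun _ => -c))))
    (Sum.elim (Sum.elim (fun _ => 0) (fun _ => 0))
      (Sum.elim (fun _ => 0) (Sum.elim (fun _ => -1) (fun _ => 1))))
    (Sum.elim (Sum.elim (fun _ => 0) (fun _ => 0))
      (Sum.elim b (Sum.elim (fun _ => 0) (fun _ => 0))))
  have hTeq : {t : ℝ | ∃ v ∈ M, c ⬝ᵥ v = t} = {t | ∀ j, e j * t ≤ f j} := by
    rw [← hT]
    ext t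
    simp only [Set.mem_setOf_eq]
    constructor
    · rintro ⟨v, hvM, hvt⟩
      rw [hMdef] at hvM
      obtain ⟨h1, h2⟩ := hvM
      refine ⟨v, ?_⟩
      rintro ((i | i) | (j | (u | u))) <;>
        simp only [Sum.elim_inl, Sum.elim_inr, neg_dotProduct]
      · have h := congrFun h1 i
        have h' : S i ⬝ᵥ v = 0 := h
        linarith
      · have h := congrFun h1 i
        have h' : S i ⬝ᵥ v = 0 := h
        linarith
      · have h := h2 j
        have h' : A j ⬝ᵥ v ≤ b j := h
        linarith
      · linarith
      · linarith
    · rintro ⟨v, hv⟩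
      have hS : ∀ i, S.mulVec v i = 0 := by
        intro i
        have h1 := hv (Sum.inl (Sum.inl i))
        have h2 := hv (Sum.inl (Sum.inr i))
        simp only [Sum.elim_inl, Sum.elim_inr, neg_dotProduct] at h1 h2
        show S i ⬝ᵥ v = 0
        linarith
      have hA : ∀ j, A.mulVec v j ≤ b j := by
        intro j
        have h := hv (Sum.inr (Sum.inl j))
        simp only [Sum.elim_inl, Sum.elim_inr] at h
        show A j ⬝ᵥ v ≤ b j
        linarith
      have ht : c ⬝ᵥ v = t := by
        have h1 := hv (Sum.inr (Sum.inr (Sum.inl ())))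
        have h2 := hv (Sum.inr (Sum.inr (Sum.inr ())))
        simp only [Sum.elim_inl, Sum.elim_inr, neg_dotProduct] at h1 h2
        linarith
      exact ⟨v, by rw [hMdef]; exact ⟨funext hS, hA⟩, ht⟩
  have hclosed : IsClosed {t : ℝ | ∃ v ∈ M, c ⬝ᵥ v = t} := by
    rw [hTeq]
    have : {t : ℝ | ∀ j, e j * t ≤ f j} = ⋂ j, {t : ℝ | e j * t ≤ f j} := by
      ext t; simp
    rw [this]
    exact isClosed_iInter fun j =>
      isClosed_le (continuous_const.mul continuous_id) continuous_const
  obtain ⟨v₁, hv₁⟩ := hne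
  have hTne : Set.Nonempty {t : ℝ | ∃ v ∈ M, c ⬝ᵥ v = t} := ⟨c ⬝ᵥ v₁, v₁, hv₁, rfl⟩
  have hTbdd : BddAbove {t : ℝ | ∃ v ∈ M, c ⬝ᵥ v = t} := by
    obtain ⟨B, hB⟩ := hbdd
    refine ⟨B, ?_⟩
    rintro t ⟨v, hv, rfl⟩
    exact hB v hv
  obtain ⟨v₀, hv₀M, hv₀⟩ := hclosed.csSup_mem hTne hTbdd
  refine ⟨v₀, hv₀M, fun w hw => ?_⟩
  rw [hv₀]
  exact le_csSup hTbdd ⟨w, hw, rfl⟩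
end

section
/- Let M = {v ∈ ℝ^N | S v = 0 and A v ≤ b componentwise} be nonempty. Then for almost every c ∈ ℝ^N (with respect to N-dimensional Lebesgue measure), the following holds: if v ↦ cᵀ v is bounded above on M, then there is a unique maximizer of cᵀ v over M, and this maximizer is an extreme point of M. (Theorem 4 of the paper.) -/
open Matrix MeasureTheory Metric Set

namespace GenericLP

variable {N : ℕ}


/-- The continuous linear map `c ↦ c ⬝ᵥ v`. -/
noncomputable def dotCLM (v : Fin N → ℝ) : (Fin N → ℝ) →L[ℝ] ℝ :=
  ∑ i, v i • ContinuousLinearMap.proj i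

lemma dotCLM_apply (v c : Fin N → ℝ) : dotCLM v c = c ⬝ᵥ v := by
  simp [dotCLM, dotProduct, mul_comm]

lemma dotCLM_injective : Function.Injective (dotCLM (N := N)) := by
  intro v w h
  funext i
  have := congrArg (fun T : (Fin N → ℝ) →L[ℝ] ℝ => T (Pi.single i 1)) h
  simpa [dotCLM_apply, single_dotProduct] using this

lemma continuous_dot (c : Fin N → ℝ) : Continuous fun v : Fin N → ℝ => c ⬝ᵥ v := by
  have : (fun v : Fin N → ℝ => c ⬝ᵥ v) = fun v => dotCLM c v := by
    funext v; rw [dotCLM_apply, dotProduct_comm]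
  rw [this]; exact (dotCLM c).continuous

/-- The set of objectives bounded above on `M`. -/
def Dset (M : Set (Fin N → ℝ)) : Set (Fin N → ℝ) := {c | ∃ B : ℝ, ∀ v ∈ M, c ⬝ᵥ v ≤ B}

/-- The value function. -/
noncomputable def supf (M : Set (Fin N → ℝ)) (c : Fin N → ℝ) : ℝ :=
  sSup ((fun v => c ⬝ᵥ v) '' M)

lemma bddAbove_of_mem_Dset {M : Set (Fin N → ℝ)} {c : Fin N → ℝ} (hc : c ∈ Dset M) :
    BddAbove ((fun v => c ⬝ᵥ v) '' M) := by
  obtain ⟨B, hB⟩ := hc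
  exact ⟨B, by rintro _ ⟨v, hv, rfl⟩; exact hB v hv⟩

lemma le_supf {M : Set (Fin N → ℝ)} {c : Fin N → ℝ} (hc : c ∈ Dset M) {v : Fin N → ℝ}
    (hv : v ∈ M) : c ⬝ᵥ v ≤ supf M c :=
  le_csSup (bddAbove_of_mem_Dset hc) ⟨v, hv, rfl⟩

lemma convex_Dset (M : Set (Fin N → ℝ)) : Convex ℝ (Dset M) := by
  intro c₁ hc₁ c₂ hc₂ a b ha hb hab
  obtain ⟨B₁, hB₁⟩ := hc₁
  obtain ⟨B₂, hB₂⟩ := hc₂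
  refine ⟨a * B₁ + b * B₂, fun v hv => ?_⟩
  have : (a • c₁ + b • c₂) ⬝ᵥ v = a * (c₁ ⬝ᵥ v) + b * (c₂ ⬝ᵥ v) := by
    simp [add_dotProduct, smul_dotProduct]
  rw [this]
  have := mul_le_mul_of_nonneg_left (hB₁ v hv) ha
  have := mul_le_mul_of_nonneg_left (hB₂ v hv) hb
  linarith

lemma convexOn_supf {M : Set (Fin N → ℝ)} (hne : M.Nonempty) :
    ConvexOn ℝ (Dset M) (supf M) := by
  refine ⟨convex_Dset M, fun x hx y hy a b ha hb hab => ?_⟩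
  refine csSup_le (hne.image _) ?_
  rintro _ ⟨v, hv, rfl⟩
  show (a • x + b • y) ⬝ᵥ v ≤ _
  have : (a • x + b • y) ⬝ᵥ v = a * (x ⬝ᵥ v) + b * (y ⬝ᵥ v) := by
    simp [add_dotProduct, smul_dotProduct]
  rw [this]
  have h1 := mul_le_mul_of_nonneg_left (le_supf hx hv) ha
  have h2 := mul_le_mul_of_nonneg_left (le_supf hy hv) hb
  simp only [smul_eq_mul]
  linarith


lemma exists_max {M : Set (Fin N → ℝ)} (hMc : IsClosed M) (hne : M.Nonempty)
    {c : Fin N → ℝ} (hc : c ∈ interior (Dset M)) :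
    ∃ v ∈ M, ∀ w ∈ M, c ⬝ᵥ w ≤ c ⬝ᵥ v := by
  obtain ⟨v₀, hv₀⟩ := hne
  obtain ⟨ε, hε, hball⟩ := Metric.mem_nhds_iff.1 (mem_interior_iff_mem_nhds.1 hc)
  -- perturbed objectives along coordinate directions
  have hmem : ∀ (i : Fin N) (s : ℝ), |s| = 1 →
      c + (ε / 2) • (Pi.single i s : Fin N → ℝ) ∈ Dset M := by
    intro i s hs
    apply hball
    simp only [mem_ball, dist_eq_norm]
    have heq : c + (ε / 2) • (Pi.single i s : Fin N → ℝ) - c = (ε / 2) • (Pi.single i s : Fin N → ℝ) := by abel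
    rw [heq, norm_smul, Pi.norm_single]
    simp only [Real.norm_eq_abs, hs, abs_of_pos (half_pos hε), mul_one]
    linarith
  choose Bp hBp using fun i => hmem i 1 (by norm_num)
  choose Bm hBm using fun i => hmem i (-1) (by norm_num)
  -- the superlevel set
  set M' : Set (Fin N → ℝ) := {v ∈ M | c ⬝ᵥ v₀ ≤ c ⬝ᵥ v} with hM'
  have hM'ne : M'.Nonempty := ⟨v₀, hv₀, le_refl _⟩
  have hM'closed : IsClosed M' :=
    hMc.inter (isClosed_le continuous_const (continuous_dot c))
  -- coordinatewise bounds on M'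
  have hcoord : ∀ v ∈ M', ∀ i, |v i| ≤ (2 / ε) * (|Bp i| + |Bm i| + |c ⬝ᵥ v₀|) := by
    rintro v ⟨hvM, hvlev⟩ i
    have h1 : (c + (ε / 2) • (Pi.single i 1 : Fin N → ℝ)) ⬝ᵥ v ≤ Bp i := hBp i v hvM
    have h2 : (c + (ε / 2) • (Pi.single i (-1) : Fin N → ℝ)) ⬝ᵥ v ≤ Bm i := hBm i v hvM
    have e1 : (c + (ε / 2) • (Pi.single i 1 : Fin N → ℝ)) ⬝ᵥ v = c ⬝ᵥ v + (ε / 2) * v i := by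
      simp [add_dotProduct, smul_dotProduct, single_dotProduct]
    have e2 : (c + (ε / 2) • (Pi.single i (-1) : Fin N → ℝ)) ⬝ᵥ v = c ⬝ᵥ v - (ε / 2) * v i := by
      simp [add_dotProduct, smul_dotProduct, single_dotProduct]; ring
    rw [e1] at h1; rw [e2] at h2
    have hb1 : (ε / 2) * v i ≤ Bp i - c ⬝ᵥ v₀ := by linarith
    have hb2 : -((ε / 2) * v i) ≤ Bm i - c ⬝ᵥ v₀ := by linarith
    have habs : (ε / 2) * |v i| ≤ |Bp i| + |Bm i| + |c ⬝ᵥ v₀| := by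
      have l1 := le_abs_self (Bp i); have l2 := le_abs_self (Bm i)
      have l3 := neg_abs_le (c ⬝ᵥ v₀); have l4 := abs_nonneg (Bp i)
      have l5 := abs_nonneg (Bm i)
      rcases abs_cases (v i) with ⟨h, _⟩ | ⟨h, _⟩ <;> rw [h] <;> linarith
    have h2ε : 0 < 2 / ε := by positivity
    calc |v i| = (2 / ε) * ((ε / 2) * |v i|) := by field_simp
    _ ≤ (2 / ε) * (|Bp i| + |Bm i| + |c ⬝ᵥ v₀|) :=
        mul_le_mul_of_nonneg_left habs h2ε.le
  -- M' is bounded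
  set R : ℝ := ∑ i, (2 / ε) * (|Bp i| + |Bm i| + |c ⬝ᵥ v₀|) with hR
  have hRnn : ∀ i : Fin N, 0 ≤ (2 / ε) * (|Bp i| + |Bm i| + |c ⬝ᵥ v₀|) := by
    intro i; positivity
  have hM'bdd : M' ⊆ closedBall 0 R := by
    intro v hv
    simp only [mem_closedBall, dist_zero_right]
    rw [pi_norm_le_iff_of_nonneg (Finset.sum_nonneg fun i _ => hRnn i)]
    intro i
    rw [Real.norm_eq_abs]
    exact (hcoord v hv i).trans (Finset.single_le_sum (fun j _ => hRnn j) (Finset.mem_univ i))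
  have hcomp : IsCompact M' :=
    (isCompact_closedBall (0 : Fin N → ℝ) R).of_isClosed_subset hM'closed hM'bdd
  obtain ⟨v, hvM', hvmax⟩ := hcomp.exists_isMaxOn hM'ne (continuous_dot c).continuousOn
  refine ⟨v, hvM'.1, fun w hw => ?_⟩
  rcases le_or_gt (c ⬝ᵥ v₀) (c ⬝ᵥ w) with h | h
  · exact hvmax ⟨hw, h⟩
  · exact h.le.trans (hvmax ⟨hv₀, le_refl _⟩)

lemma max_unique {M : Set (Fin N → ℝ)} {c : Fin N → ℝ}
    (hc : c ∈ interior (Dset M))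
    (hdiff : DifferentiableAt ℝ (supf M) c)
    {v w : Fin N → ℝ} (hv : v ∈ M) (hw : w ∈ M)
    (hvmax : ∀ u ∈ M, c ⬝ᵥ u ≤ c ⬝ᵥ v) (hwmax : ∀ u ∈ M, c ⬝ᵥ u ≤ c ⬝ᵥ w) :
    v = w := by
  have key : ∀ u ∈ M, (∀ x ∈ M, c ⬝ᵥ x ≤ c ⬝ᵥ u) → fderiv ℝ (supf M) c = dotCLM u := by
    intro u hu humax
    have hfc : supf M c = dotCLM u c := by
      rw [dotCLM_apply]
      refine le_antisymm (csSup_le ⟨_, ⟨u, hu, rfl⟩⟩ ?_) (le_supf (interior_subset hc) hu)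
      rintro _ ⟨x, hx, rfl⟩
      exact humax x hx
    have hmin : IsLocalMin (fun c' => supf M c' - dotCLM u c') c := by
      have hev : ∀ᶠ c' in nhds c, c' ∈ Dset M :=
        Filter.Eventually.mono (isOpen_interior.eventually_mem hc) fun c' h =>
          interior_subset h
      refine hev.mono fun c' hc' => ?_
      have h1 : dotCLM u c' ≤ supf M c' := by
        rw [dotCLM_apply]; exact le_supf hc' hu
      simp only [hfc, sub_self]
      linarith
    have hd : HasFDerivAt (fun c' => supf M c' - dotCLM u c')
        (fderiv ℝ (supf M) c - dotCLM u) c :=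
      hdiff.hasFDerivAt.sub (dotCLM u).hasFDerivAt
    have h0 := hmin.fderiv_eq_zero
    rw [hd.fderiv] at h0
    have := sub_eq_zero.1 h0
    exact this
  have h1 := key v hv hvmax
  have h2 := key w hw hwmax
  exact dotCLM_injective (h1 ▸ h2 ▸ rfl : dotCLM v = dotCLM w)

lemma ae_diff {M : Set (Fin N → ℝ)} (hconv : ConvexOn ℝ (Dset M) (supf M)) :
    ∀ᵐ c : Fin N → ℝ, c ∈ interior (Dset M) → DifferentiableAt ℝ (supf M) c := by
  set f := supf M
  have hll : LocallyLipschitzOn (interior (Dset M)) f :=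
    hconv.locallyLipschitzOn_interior
  -- for each point of the interior, choose a ball on which f is Lipschitz
  have hloc : ∀ x : interior (Dset M), ∃ r : ℝ, 0 < r ∧
      ∃ K : NNReal, LipschitzOnWith K f (ball (x : Fin N → ℝ) r) := by
    rintro ⟨x, hx⟩
    obtain ⟨K, t, ht, hK⟩ := hll hx
    rw [nhdsWithin_eq_nhds.2 (isOpen_interior.mem_nhds hx)] at ht
    obtain ⟨r, hr, hrt⟩ := Metric.mem_nhds_iff.1 ht
    exact ⟨r, hr, K, hK.mono hrt⟩
  choose r hr K hK using hloc
  -- on each such ball, f is a.e. differentiable (Rademacher + Lipschitz extension)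
  have hball : ∀ x : interior (Dset M),
      ∀ᵐ c : Fin N → ℝ, c ∈ ball (x : Fin N → ℝ) (r x) → DifferentiableAt ℝ f c := by
    intro x
    obtain ⟨g, hg, hfg⟩ := (hK x).extend_real
    filter_upwards [hg.ae_differentiableAt (μ := volume)] with c hc hcball
    exact hc.congr_of_eventuallyEq <|
      Filter.eventuallyEq_iff_exists_mem.2
        ⟨ball (x : Fin N → ℝ) (r x), isOpen_ball.mem_nhds hcball, hfg⟩
  -- extract a countable subcover
  obtain ⟨T, hTc, hTU⟩ := TopologicalSpace.isOpen_iUnion_countable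
    (fun x : interior (Dset M) => ball (x : Fin N → ℝ) (r x)) (fun x => isOpen_ball)
  have hae : ∀ᵐ c : Fin N → ℝ, ∀ x ∈ T, c ∈ ball (x : Fin N → ℝ) (r x) →
      DifferentiableAt ℝ f c := (ae_ball_iff hTc).2 fun x _ => hball x
  filter_upwards [hae] with c hc hcmem
  have : c ∈ ⋃ x : interior (Dset M), ball (x : Fin N → ℝ) (r x) :=
    mem_iUnion.2 ⟨⟨c, hcmem⟩, mem_ball_self (hr _)⟩
  rw [← hTU] at this
  obtain ⟨x, hxT, hcx⟩ := mem_iUnion₂.1 this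
  exact hc x hxT hcx

lemma isClosed_M {m K : ℕ} (S : Matrix (Fin m) (Fin N) ℝ) (A : Matrix (Fin K) (Fin N) ℝ)
    (b : Fin K → ℝ) :
    IsClosed {v : Fin N → ℝ | S.mulVec v = 0 ∧ ∀ j, A.mulVec v j ≤ b j} := by
  have : {v : Fin N → ℝ | S.mulVec v = 0 ∧ ∀ j, A.mulVec v j ≤ b j} =
      (⋂ i, {v : Fin N → ℝ | S i ⬝ᵥ v = 0}) ∩ ⋂ j, {v : Fin N → ℝ | A j ⬝ᵥ v ≤ b j} := by
    ext v
    simp [Matrix.mulVec, funext_iff]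
  rw [this]
  refine IsClosed.inter (isClosed_iInter fun i => ?_) (isClosed_iInter fun j => ?_)
  · exact isClosed_eq (continuous_dot (S i)) continuous_const
  · exact isClosed_le (continuous_dot (A j)) continuous_const

end GenericLP

open GenericLP

/-- **Theorem 4 of the paper.** Let `M = {v | S v = 0, A v ≤ b}` be nonempty. For
almost every objective vector `c ∈ ℝ^N` (w.r.t. Lebesgue measure), if `v ↦ cᵀ v` is
bounded above on `M`, then there is a unique maximizer of `cᵀ v` over `M`, and this
maximizer is an extreme point of `M`. -/
theorem generic_objective_unique_extreme_maximizer (m N K : ℕ)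
    (S : Matrix (Fin m) (Fin N) ℝ) (A : Matrix (Fin K) (Fin N) ℝ)
    (b : Fin K → ℝ)
    (M : Set (Fin N → ℝ))
    (hMdef : M = {v : Fin N → ℝ | S.mulVec v = 0 ∧ ∀ j, A.mulVec v j ≤ b j})
    (hne : M.Nonempty) :
    ∀ᵐ c : Fin N → ℝ,
      (∃ B : ℝ, ∀ v ∈ M, c ⬝ᵥ v ≤ B) →
        ∃ v ∈ M, (∀ w ∈ M, c ⬝ᵥ w ≤ c ⬝ᵥ v) ∧
          (∀ w ∈ M, (∀ u ∈ M, c ⬝ᵥ u ≤ c ⬝ᵥ w) → w = v) ∧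
          ¬ ∃ x ∈ M, ∃ y ∈ M, x ≠ y ∧
              ∃ a b' : ℝ, a + b' = 1 ∧ 0 < a ∧ a < 1 ∧ v = a • x + b' • y := by
  have hMc : IsClosed M := hMdef ▸ isClosed_M S A b
  have hfr : ∀ᵐ c : Fin N → ℝ, c ∉ frontier (Dset M) :=
    measure_eq_zero_iff_ae_notMem.1 ((convex_Dset M).addHaar_frontier volume)
  have hdiff := ae_diff (convexOn_supf hne (M := M))
  filter_upwards [hfr, hdiff] with c hc1 hc2 hcD
  have hcD' : c ∈ Dset M := hcD
  have hcint : c ∈ interior (Dset M) := by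
    by_contra h
    exact hc1 ⟨subset_closure hcD', h⟩
  obtain ⟨v, hvM, hvmax⟩ := exists_max hMc hne hcint
  have huniq : ∀ w ∈ M, (∀ u ∈ M, c ⬝ᵥ u ≤ c ⬝ᵥ w) → w = v := fun w hw hwmax =>
    max_unique hcint (hc2 hcint) hw hvM hwmax hvmax
  refine ⟨v, hvM, hvmax, huniq, ?_⟩
  rintro ⟨x, hx, y, hy, hxy, a, b', hab, ha, ha1, hveq⟩
  have hb' : 0 < b' := by linarith
  have hxle : c ⬝ᵥ x ≤ c ⬝ᵥ v := hvmax x hx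
  have hyle : c ⬝ᵥ y ≤ c ⬝ᵥ v := hvmax y hy
  have hsplit : c ⬝ᵥ v = a * (c ⬝ᵥ x) + b' * (c ⬝ᵥ y) := by
    rw [hveq]
    simp [dotProduct_add, dotProduct_smul]
  have hsum : a * (c ⬝ᵥ v) + b' * (c ⬝ᵥ v) = c ⬝ᵥ v := by
    rw [← add_mul, hab, one_mul]
  have hx2 := mul_le_mul_of_nonneg_left hxle ha.le
  have hy2 := mul_le_mul_of_nonneg_left hyle hb'.le
  have hxeq : c ⬝ᵥ x = c ⬝ᵥ v :=
    le_antisymm hxle (by nlinarith)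
  have hyeq : c ⬝ᵥ y = c ⬝ᵥ v :=
    le_antisymm hyle (by nlinarith)
  have hxv : x = v := huniq x hx fun u hu => (hvmax u hu).trans_eq hxeq.symm
  have hyv : y = v := huniq y hy fun u hu => (hvmax u hu).trans_eq hyeq.symm
  exact hxy (hxv.trans hyv.symm)
end
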